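/- arXiv:2210.17384 — 8 statements merged into one kernel-verified Lean document; each statement's English description precedes it below -/
import Mathlib

section
/- Let T > 0, let (Ω, 𝓕, P) be a probability space, and let 𝓖 = (𝓖_t) and 𝓗 = (𝓗_t) be filtrations on [0,T] with 𝓖_t ⊆ 𝓗_t for every t. Let Z : [0,T] × Ω → ℝ be an 𝓗-martingale, and let A : [0,T] × Ω → ℝ be jointly measurable and 𝓗-adapted with ∫₀^T E[|A_u|] du < ∞. Define Y_t := ∫₀^t A_u du + Z_t. Assume that Y is 𝓖-adapted and that for almost every u ∈ [0,T] one has E[A_u | 𝓖_u] = 0 almost surely. Then Y is a 𝓖-martingale. -/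
open MeasureTheory Set

/-!
Over `(s, t]` the increment `Y t - Y s` splits into `∫ u in Ioc s t, A u` and `Z t - Z s`.
For `B ∈ 𝒢 s ⊆ 𝒢 u` with `u ≥ s`, Fubini gives
`∫_B ∫_s^t A_u du dP = ∫_s^t ∫_B P[A u | 𝒢 u] dP du = 0`, so the first part has zero
`𝒢 s`-conditional expectation; the second has zero `ℋ s`-conditional expectation, hence, by
the tower property through `𝒢 s ≤ ℋ s`, zero `𝒢 s`-conditional expectation as well.
-/

namespace MeasureTheory

variable {Ω : Type*} {m0 : MeasurableSpace Ω} {P : Measure Ω}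

theorem integrable_uncurry_of_lintegral_lintegral_lt_top {α : Type*} [MeasurableSpace α]
    {μ : Measure α} [SFinite P] {f : α → Ω → ℝ}
    (hf : AEStronglyMeasurable (Function.uncurry f) (μ.prod P))
    (h : ∫⁻ u, ∫⁻ ω, ‖f u ω‖ₑ ∂P ∂μ < ⊤) : Integrable (Function.uncurry f) (μ.prod P) :=
  ⟨hf, by rwa [HasFiniteIntegral, lintegral_prod _ hf.enorm]⟩

theorem ae_setIntegral_Ioc_add_setIntegral_Ioc [SFinite P] {f : ℝ → Ω → ℝ} {a b c : ℝ}
    (hab : a ≤ b) (hbc : b ≤ c)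
    (hf : Integrable (Function.uncurry f) ((volume.restrict (Ioc a c)).prod P)) :
    ∀ᵐ ω ∂P, (∫ u in Ioc a b, f u ω) + ∫ u in Ioc b c, f u ω = ∫ u in Ioc a c, f u ω := by
  filter_upwards [hf.prod_left_ae] with ω hω
  replace hω : IntegrableOn (fun u => f u ω) (Ioc a c) := hω
  rw [← Ioc_union_Ioc_eq_Ioc hab hbc, setIntegral_union (Ioc_disjoint_Ioc_of_le le_rfl)
    measurableSet_Ioc (hω.mono_set (Ioc_subset_Ioc_right hbc))
    (hω.mono_set (Ioc_subset_Ioc_left hab))]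

theorem condExp_sub_ae_eq_zero_of_le {m m' : MeasurableSpace Ω} [IsFiniteMeasure P]
    (hmm' : m ≤ m') (hm' : m' ≤ m0) {f g : Ω → ℝ} (hf : Integrable f P) (hg : Integrable g P)
    (hfg : P[f | m'] =ᵐ[P] g) : P[f - g | m] =ᵐ[P] 0 := by
  have htower : P[f | m] =ᵐ[P] P[g | m] :=
    (condExp_condExp_of_le hmm' hm').symm.trans (condExp_congr_ae hfg)
  filter_upwards [condExp_sub hf hg m, htower] with ω hsub heq
  simp [hsub, heq]

theorem condExp_ae_eq_of_ae_eq_add {m : MeasurableSpace Ω} (hm : m ≤ m0)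
    [SigmaFinite (P.trim hm)] {f g r : Ω → ℝ} (hg : StronglyMeasurable[m] g)
    (hg_int : Integrable g P) (hr : Integrable r P) (hr_cond : P[r | m] =ᵐ[P] 0)
    (hf : f =ᵐ[P] g + r) : P[f | m] =ᵐ[P] g :=
  calc P[f | m] =ᵐ[P] P[g + r | m] := condExp_congr_ae hf
    _ =ᵐ[P] P[g | m] + P[r | m] := condExp_add hg_int hr m
    _ =ᵐ[P] g + 0 := by
      rw [condExp_of_stronglyMeasurable hm hg hg_int]
      exact Filter.EventuallyEq.rfl.add hr_cond
    _ = g := add_zero g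

theorem condExp_integral_ae_eq_zero {ι : Type*} [Preorder ι] [MeasurableSpace ι] {μ : Measure ι}
    [SFinite μ] [IsFiniteMeasure P] (𝒢 : Filtration ι m0) {f : ι → Ω → ℝ} {s : ι}
    (hf : Integrable (Function.uncurry f) (μ.prod P)) (hs : ∀ᵐ u ∂μ, s ≤ u)
    (hcond : ∀ᵐ u ∂μ, P[f u | 𝒢 u] =ᵐ[P] 0) :
    P[fun ω => ∫ u, f u ω ∂μ | 𝒢 s] =ᵐ[P] 0 := by
  refine (ae_eq_condExp_of_forall_setIntegral_eq (𝒢.le s) hf.integral_prod_right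
    (fun B _ _ => integrableOn_zero) (fun B hB _ => ?_)
    stronglyMeasurable_zero.aestronglyMeasurable).symm
  have hfB : Integrable (Function.uncurry f) (μ.prod (P.restrict B)) :=
    hf.mono_measure (Measure.prod_mono le_rfl Measure.restrict_le_self)
  have hinner : ∀ᵐ u ∂μ, ∫ ω in B, f u ω ∂P = 0 := by
    filter_upwards [hs, hcond, hf.prod_right_ae] with u hsu hcu (hfu : Integrable (f u) P)
    rw [← setIntegral_condExp (𝒢.le u) hfu (𝒢.mono hsu B hB)]
    exact (integral_congr_ae (ae_restrict_of_ae hcu)).trans (integral_zero _ _)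
  rw [integral_zero, eq_comm]
  simp only [Function.uncurry_apply_pair]
  rw [← integral_integral_swap hfB, integral_eq_zero_of_ae hinner]

end MeasureTheory

theorem inconspicuous_strategy_yields_martingale_general
    {Ω : Type*} {m0 : MeasurableSpace Ω} {P : Measure Ω} [IsProbabilityMeasure P]
    (T : ℝ)
    (𝒢 ℋ : Filtration ℝ m0) (hle : ∀ t, 𝒢 t ≤ ℋ t)
    (Z A : ℝ → Ω → ℝ)
    -- Z is an ℋ-martingale on [0,T]
    (hZ_int : ∀ t ∈ Icc (0:ℝ) T, Integrable (Z t) P)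
    (hZ_mart : ∀ s ∈ Icc (0:ℝ) T, ∀ t ∈ Icc (0:ℝ) T, s ≤ t →
      P[Z t | ℋ s] =ᵐ[P] Z s)
    -- A is jointly measurable and ℋ-adapted with ∫₀ᵀ E|A_u| du < ∞
    (hA_meas : Measurable (Function.uncurry A))
    (hA_int : ∫⁻ u in Icc (0:ℝ) T, ∫⁻ ω, ‖A u ω‖₊ ∂P < ⊤)
    -- Y_t = ∫₀^t A_u du + Z_t
    (Y : ℝ → Ω → ℝ)
    (hY_def : ∀ t ∈ Icc (0:ℝ) T, ∀ ω, Y t ω = (∫ u in Ioc (0:ℝ) t, A u ω) + Z t ω)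
    -- Y is 𝒢-adapted
    (hY_adapted : ∀ t ∈ Icc (0:ℝ) T, StronglyMeasurable[𝒢 t] (Y t))
    -- for a.e. u ∈ [0,T], E[A_u | 𝒢_u] = 0 a.s.
    (hA_cond : ∀ᵐ u ∂(volume.restrict (Icc (0:ℝ) T)), P[A u | 𝒢 u] =ᵐ[P] 0) :
    (∀ t ∈ Icc (0:ℝ) T, Integrable (Y t) P) ∧
      ∀ s ∈ Icc (0:ℝ) T, ∀ t ∈ Icc (0:ℝ) T, s ≤ t → P[Y t | 𝒢 s] =ᵐ[P] Y s := by
  have hA : Integrable (Function.uncurry A) ((volume.restrict (Icc 0 T)).prod P) :=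
    integrable_uncurry_of_lintegral_lintegral_lt_top hA_meas.aestronglyMeasurable hA_int
  have hsub {a b : ℝ} (ha : 0 ≤ a) (hb : b ≤ T) : Ioc a b ⊆ Icc 0 T :=
    fun u hu => ⟨ha.trans hu.1.le, hu.2.trans hb⟩
  have hA_Ioc {a b : ℝ} (ha : 0 ≤ a) (hb : b ≤ T) :
      Integrable (Function.uncurry A) ((volume.restrict (Ioc a b)).prod P) :=
    hA.mono_measure (Measure.prod_mono (Measure.restrict_mono (hsub ha hb) le_rfl) le_rfl)
  have hY_int : ∀ t ∈ Icc 0 T, Integrable (Y t) P := fun t ht =>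
    ((hA_Ioc le_rfl ht.2).integral_prod_right.add (hZ_int t ht)).congr
      (ae_of_all _ fun ω => (hY_def t ht ω).symm)
  refine ⟨hY_int, fun s hs t ht hst => ?_⟩
  set W : Ω → ℝ := fun ω => ∫ u in Ioc s t, A u ω
  have hW : Integrable W P := (hA_Ioc hs.1 ht.2).integral_prod_right
  have hZ_incr : Integrable (Z t - Z s) P := (hZ_int t ht).sub (hZ_int s hs)
  have hsplit : Y t =ᵐ[P] Y s + (W + (Z t - Z s)) := by
    filter_upwards [ae_setIntegral_Ioc_add_setIntegral_Ioc hs.1 hst (hA_Ioc le_rfl ht.2)]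
      with ω hω
    simp only [Pi.add_apply, Pi.sub_apply, hY_def t ht, hY_def s hs, W, ← hω]
    ring
  have hW_cond : P[W | 𝒢 s] =ᵐ[P] 0 :=
    condExp_integral_ae_eq_zero 𝒢 (hA_Ioc hs.1 ht.2)
      (ae_restrict_of_forall_mem measurableSet_Ioc fun u hu => hu.1.le)
      (ae_restrict_of_ae_restrict_of_subset (hsub hs.1 ht.2) hA_cond)
  have hZ_cond : P[Z t - Z s | 𝒢 s] =ᵐ[P] 0 :=
    condExp_sub_ae_eq_zero_of_le (hle s) (ℋ.le s) (hZ_int t ht) (hZ_int s hs)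
      (hZ_mart s hs t ht hst)
  refine condExp_ae_eq_of_ae_eq_add (𝒢.le s) (hY_adapted s hs) (hY_int s hs) (hW.add hZ_incr)
    ?_ hsplit
  calc P[W + (Z t - Z s) | 𝒢 s]
      =ᵐ[P] P[W | 𝒢 s] + P[Z t - Z s | 𝒢 s] := condExp_add hW hZ_incr _
    _ =ᵐ[P] 0 + 0 := hW_cond.add hZ_cond
    _ = 0 := add_zero 0

/-- Inconspicuousness (Proposition 3.1, key direction): if `Z` is an `ℋ`-martingale on
`[0,T]`, `A` is jointly measurable, `ℋ`-adapted with finite expected absolute integral,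
`Y t = ∫₀^t A_u du + Z t` is `𝒢`-adapted where `𝒢 ⊆ ℋ`, and for a.e. `u ∈ [0,T]` the
conditional expectation of `A u` given `𝒢 u` vanishes, then `Y` is a `𝒢`-martingale
on `[0,T]`. -/
theorem inconspicuous_strategy_yields_martingale
    {Ω : Type*} {m0 : MeasurableSpace Ω} {P : Measure Ω} [IsProbabilityMeasure P]
    (T : ℝ) (hT : 0 < T)
    (𝒢 ℋ : Filtration ℝ m0) (hle : ∀ t, 𝒢 t ≤ ℋ t)
    (Z A : ℝ → Ω → ℝ)
    -- Z is an ℋ-martingale on [0,T]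
    (hZ_adapted : ∀ t ∈ Icc (0:ℝ) T, StronglyMeasurable[ℋ t] (Z t))
    (hZ_int : ∀ t ∈ Icc (0:ℝ) T, Integrable (Z t) P)
    (hZ_mart : ∀ s ∈ Icc (0:ℝ) T, ∀ t ∈ Icc (0:ℝ) T, s ≤ t →
      P[Z t | ℋ s] =ᵐ[P] Z s)
    -- A is jointly measurable and ℋ-adapted with ∫₀ᵀ E|A_u| du < ∞
    (hA_meas : Measurable (Function.uncurry A))
    (hA_adapted : ∀ t ∈ Icc (0:ℝ) T, StronglyMeasurable[ℋ t] (A t))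
    (hA_int : ∫⁻ u in Icc (0:ℝ) T, ∫⁻ ω, ‖A u ω‖₊ ∂P < ⊤)
    -- Y_t = ∫₀^t A_u du + Z_t
    (Y : ℝ → Ω → ℝ)
    (hY_def : ∀ t ∈ Icc (0:ℝ) T, ∀ ω, Y t ω = (∫ u in Ioc (0:ℝ) t, A u ω) + Z t ω)
    -- Y is 𝒢-adapted
    (hY_adapted : ∀ t ∈ Icc (0:ℝ) T, StronglyMeasurable[𝒢 t] (Y t))
    -- for a.e. u ∈ [0,T], E[A_u | 𝒢_u] = 0 a.s.
    (hA_cond : ∀ᵐ u ∂(volume.restrict (Icc (0:ℝ) T)), P[A u | 𝒢 u] =ᵐ[P] 0) :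
    (∀ t ∈ Icc (0:ℝ) T, Integrable (Y t) P) ∧
      ∀ s ∈ Icc (0:ℝ) T, ∀ t ∈ Icc (0:ℝ) T, s ≤ t → P[Y t | 𝒢 s] =ᵐ[P] Y s :=
  inconspicuous_strategy_yields_martingale_general T 𝒢 ℋ hle Z A hZ_int hZ_mart hA_meas hA_int Y
    hY_def hY_adapted hA_cond
end

section
/- Let n ≥ 1, let μ be a Borel probability measure on ℝⁿ × ℝⁿ (with generic point (z̃,s)) and denote by μ₂ its second marginal (the pushforward under (z̃,s) ↦ s). Let ν be a Borel probability measure on ℝⁿ with ∫ |y|² dν(y) < ∞, and let f : ℝⁿ → ℝⁿ be measurable with ∫ |f(s)|² dμ₂(s) < ∞. Then the supremum of ∫ ⟨y, f(s)⟩ dπ((z̃,s),y) over all Borel probability measures π on (ℝⁿ×ℝⁿ) × ℝⁿ whose pushforwards under the two projections are μ and ν equals the supremum of ∫ ⟨y, f(s)⟩ dπ'(s,y) over all Borel probability measures π' on ℝⁿ × ℝⁿ whose pushforwards under the two projections are μ₂ and ν. -/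
open MeasureTheory Matrix ProbabilityTheory

/-- Auxiliary: mapping the composition-product with a kernel pulled back along `Prod.fst`
by forgetting the middle coordinate yields the composition-product of the first marginal. -/
lemma aux_map_compProd_comap_fst {α β γ : Type*} [MeasurableSpace α] [MeasurableSpace β]
    [MeasurableSpace γ] (ρ : Measure (α × β)) [SFinite ρ] (κ : Kernel α γ)
    [IsSFiniteKernel κ] :
    (ρ ⊗ₘ (κ.comap Prod.fst measurable_fst)).map (fun p => (p.1.1, p.2)) =
      ρ.fst ⊗ₘ κ := by
  have hm : Measurable (fun p : (α × β) × γ => (p.1.1, p.2)) := by fun_prop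
  ext s hs
  rw [Measure.map_apply hm hs, Measure.compProd_apply (hm hs), Measure.compProd_apply hs,
    Measure.fst, lintegral_map (Kernel.measurable_kernel_prodMk_left hs) measurable_fst]
  rfl

/-- Auxiliary: measurability of the bilinear surplus. -/
lemma aux_meas_surplus {n : ℕ} {f : (Fin n → ℝ) → (Fin n → ℝ)} (hf : Measurable f) :
    Measurable (fun q : (Fin n → ℝ) × (Fin n → ℝ) => q.2 ⬝ᵥ f q.1) := by
  unfold dotProduct
  exact Finset.measurable_sum _ fun i _ =>
    ((measurable_pi_apply i).comp measurable_snd).mul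
      ((measurable_pi_apply i).comp (hf.comp measurable_fst))

/-- Marginal reduction (Lemma 6.1): for the bilinear surplus `⟨y, f(s)⟩`, the optimal
transport value over couplings of the joint law `μ` of `(z̃, s)` with `ν` equals the
optimal transport value over couplings of the second marginal `μ₂ = μ.map Prod.snd`
with `ν`. Here `⬝ᵥ` is the Euclidean inner product on `ℝⁿ`. -/
theorem marginal_reduction_bilinear_surplus {n : ℕ} (hn : 1 ≤ n)
    (μ : Measure ((Fin n → ℝ) × (Fin n → ℝ))) [IsProbabilityMeasure μ]
    (ν : Measure (Fin n → ℝ)) [IsProbabilityMeasure ν]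
    (hν2 : Integrable (fun y => y ⬝ᵥ y) ν)
    (f : (Fin n → ℝ) → (Fin n → ℝ)) (hf : Measurable f)
    (hf2 : Integrable (fun s => f s ⬝ᵥ f s) (μ.map Prod.snd)) :
    sSup {r : ℝ | ∃ π : Measure (((Fin n → ℝ) × (Fin n → ℝ)) × (Fin n → ℝ)),
        IsProbabilityMeasure π ∧ π.map Prod.fst = μ ∧ π.map Prod.snd = ν ∧
        r = ∫ q, q.2 ⬝ᵥ f q.1.2 ∂π} =
    sSup {r : ℝ | ∃ π' : Measure ((Fin n → ℝ) × (Fin n → ℝ)),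
        IsProbabilityMeasure π' ∧ π'.map Prod.fst = μ.map Prod.snd ∧
        π'.map Prod.snd = ν ∧
        r = ∫ q, q.2 ⬝ᵥ f q.1 ∂π'} := by
  have hg : Measurable (fun q : (Fin n → ℝ) × (Fin n → ℝ) => q.2 ⬝ᵥ f q.1) :=
    aux_meas_surplus hf
  have hgm : Measurable (fun q : ((Fin n → ℝ) × (Fin n → ℝ)) × (Fin n → ℝ) =>
      (q.1.2, q.2)) := by fun_prop
  have hG : Measurable (fun q : ((Fin n → ℝ) × (Fin n → ℝ)) × (Fin n → ℝ) =>
      q.2 ⬝ᵥ f q.1.2) := hg.comp hgm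
  congr 1
  ext r
  constructor
  · rintro ⟨π, hπ, hπ1, hπ2, hr⟩
    refine ⟨π.map (fun q => (q.1.2, q.2)), Measure.isProbabilityMeasure_map hgm.aemeasurable,
      ?_, ?_, ?_⟩
    · calc (π.map (fun q => (q.1.2, q.2))).map Prod.fst
          = π.map (Prod.fst ∘ fun q => (q.1.2, q.2)) := Measure.map_map measurable_fst hgm
        _ = (π.map Prod.fst).map Prod.snd := (Measure.map_map measurable_snd measurable_fst).symm
        _ = μ.map Prod.snd := by rw [hπ1]
    · calc (π.map (fun q => (q.1.2, q.2))).map Prod.snd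
          = π.map (Prod.snd ∘ fun q => (q.1.2, q.2)) := Measure.map_map measurable_snd hgm
        _ = ν := hπ2
    · rw [hr]
      exact (integral_map hgm.aemeasurable hg.aestronglyMeasurable).symm
  · rintro ⟨π', hπ', hπ'1, hπ'2, hr⟩
    -- conditional kernel of `z̃` given `s`
    set ρ : Measure ((Fin n → ℝ) × (Fin n → ℝ)) := μ.map Prod.swap with hρ
    have hρprob : IsProbabilityMeasure ρ :=
      Measure.isProbabilityMeasure_map measurable_swap.aemeasurable
    set κ : Kernel (Fin n → ℝ) (Fin n → ℝ) := ρ.condKernel with hκ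
    have hρfst : ρ.fst = μ.map Prod.snd := by
      rw [Measure.fst, hρ, Measure.map_map measurable_fst measurable_swap]
      rfl
    set τ : Measure (((Fin n → ℝ) × (Fin n → ℝ)) × (Fin n → ℝ)) :=
      π' ⊗ₘ (κ.comap Prod.fst measurable_fst) with hτ
    have hτprob : IsProbabilityMeasure τ := by rw [hτ]; infer_instance
    have hemeas : Measurable (fun p : ((Fin n → ℝ) × (Fin n → ℝ)) × (Fin n → ℝ) =>
        ((p.2, p.1.1), p.1.2)) := by fun_prop
    have hm : Measurable (fun p : ((Fin n → ℝ) × (Fin n → ℝ)) × (Fin n → ℝ) =>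
        (p.1.1, p.2)) := by fun_prop
    have hτfst : τ.map Prod.fst = π' := by
      have := Measure.fst_compProd π' (κ.comap Prod.fst measurable_fst)
      rwa [Measure.fst] at this
    have hkey : τ.map (fun p => (p.1.1, p.2)) = (μ.map Prod.snd) ⊗ₘ κ := by
      rw [hτ, aux_map_compProd_comap_fst, Measure.fst, hπ'1]
    have hdis : (μ.map Prod.snd) ⊗ₘ κ = ρ := by
      rw [← hρfst]; exact ρ.disintegrate κ
    refine ⟨τ.map (fun p => ((p.2, p.1.1), p.1.2)),
      Measure.isProbabilityMeasure_map hemeas.aemeasurable, ?_, ?_, ?_⟩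
    · calc (τ.map (fun p => ((p.2, p.1.1), p.1.2))).map Prod.fst
          = τ.map (Prod.fst ∘ fun p => ((p.2, p.1.1), p.1.2)) :=
            Measure.map_map measurable_fst hemeas
        _ = (τ.map (fun p => (p.1.1, p.2))).map Prod.swap :=
            (Measure.map_map measurable_swap hm).symm
        _ = ρ.map Prod.swap := by rw [hkey, hdis]
        _ = μ := by
            rw [hρ, Measure.map_map measurable_swap measurable_swap, Prod.swap_swap_eq,
              Measure.map_id]
    · calc (τ.map (fun p => ((p.2, p.1.1), p.1.2))).map Prod.snd
          = τ.map (Prod.snd ∘ fun p => ((p.2, p.1.1), p.1.2)) :=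
            Measure.map_map measurable_snd hemeas
        _ = (τ.map Prod.fst).map Prod.snd :=
            (Measure.map_map measurable_snd measurable_fst).symm
        _ = ν := by rw [hτfst, hπ'2]
    · rw [hr]
      calc ∫ q, q.2 ⬝ᵥ f q.1 ∂π'
          = ∫ q, q.2 ⬝ᵥ f q.1 ∂(τ.map Prod.fst) := by rw [hτfst]
        _ = ∫ p, p.1.2 ⬝ᵥ f p.1.1 ∂τ :=
            integral_map measurable_fst.aemeasurable hg.aestronglyMeasurable
        _ = ∫ q, q.2 ⬝ᵥ f q.1.2 ∂(τ.map (fun p => ((p.2, p.1.1), p.1.2))) :=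
            (integral_map hemeas.aemeasurable hG.aestronglyMeasurable).symm
end

section
/- Let V : ℝ → ℝ be convex, let λ > 0 and m_β ∈ ℝ. Define Γ(y) := V((1+λ)y + m_β)/(1+λ) and Γᶜ(z) := V(−(1+λ⁻¹)z − λ⁻¹ m_β)/(1+λ⁻¹). Then for all y, z ∈ ℝ one has V(y − z) ≤ Γ(y) + Γᶜ(z), with equality when y = −(z + m_β)/λ. If moreover V is strictly convex, then equality holds if and only if y = −(z + m_β)/λ. -/
/-- Kantorovich potentials for activist trading (Lemma 6.2): for convex `V`, `λ > 0`
and `m_β ∈ ℝ`, with `Γ(y) = V((1+λ)y + m_β)/(1+λ)` and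
`Γᶜ(z) = V(−(1+λ⁻¹)z − λ⁻¹m_β)/(1+λ⁻¹)`, one has `V(y−z) ≤ Γ(y) + Γᶜ(z)` for all
`y, z`, with equality when `y = −(z+m_β)/λ`; under strict convexity, equality holds
if and only if `y = −(z+m_β)/λ`. -/
theorem activist_potentials (V : ℝ → ℝ) (hV : ConvexOn ℝ Set.univ V)
    (lam : ℝ) (hlam : 0 < lam) (mβ : ℝ) :
    (∀ y z : ℝ, V (y - z) ≤
        V ((1 + lam) * y + mβ) / (1 + lam)
          + V (-(1 + lam⁻¹) * z - lam⁻¹ * mβ) / (1 + lam⁻¹)) ∧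
    (∀ z : ℝ, V (-(z + mβ) / lam - z) =
        V ((1 + lam) * (-(z + mβ) / lam) + mβ) / (1 + lam)
          + V (-(1 + lam⁻¹) * z - lam⁻¹ * mβ) / (1 + lam⁻¹)) ∧
    (StrictConvexOn ℝ Set.univ V → ∀ y z : ℝ,
      (V (y - z) =
        V ((1 + lam) * y + mβ) / (1 + lam)
          + V (-(1 + lam⁻¹) * z - lam⁻¹ * mβ) / (1 + lam⁻¹))
        ↔ y = -(z + mβ) / lam) := by
  have h1 : (0:ℝ) < 1 + lam := by linarith
  have hli : (0:ℝ) < lam⁻¹ := inv_pos.mpr hlam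
  have h2 : (0:ℝ) < 1 + lam⁻¹ := by linarith
  set a : ℝ := (1 + lam)⁻¹ with ha_def
  set b : ℝ := lam / (1 + lam) with hb_def
  have ha : 0 < a := inv_pos.mpr h1
  have hb : 0 < b := div_pos hlam h1
  have hab : a + b = 1 := by
    rw [ha_def, hb_def]; field_simp
  have hbinv : ∀ x : ℝ, x / (1 + lam⁻¹) = b * x := by
    intro x; rw [hb_def]; field_simp; ring
  have hcomb : ∀ y z : ℝ,
      a * ((1 + lam) * y + mβ) + b * (-(1 + lam⁻¹) * z - lam⁻¹ * mβ) = y - z := by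
    intro y z; rw [ha_def, hb_def]; field_simp; ring
  have hAa : ∀ x : ℝ, x / (1 + lam) = a * x := by
    intro x; rw [ha_def]; field_simp
  have hineq : ∀ y z : ℝ, V (y - z) ≤
      V ((1 + lam) * y + mβ) / (1 + lam)
        + V (-(1 + lam⁻¹) * z - lam⁻¹ * mβ) / (1 + lam⁻¹) := by
    intro y z
    rw [hAa, hbinv, ← hcomb y z]
    exact hV.2 (Set.mem_univ _) (Set.mem_univ _) ha.le hb.le hab
  have hAeqB : ∀ y z : ℝ, y = -(z + mβ) / lam →
      (1 + lam) * y + mβ = -(1 + lam⁻¹) * z - lam⁻¹ * mβ := by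
    intro y z hy; subst hy; field_simp; ring
  have heq : ∀ y z : ℝ, y = -(z + mβ) / lam →
      V (y - z) =
        V ((1 + lam) * y + mβ) / (1 + lam)
          + V (-(1 + lam⁻¹) * z - lam⁻¹ * mβ) / (1 + lam⁻¹) := by
    intro y z hy
    have hAB := hAeqB y z hy
    have hyz : y - z = (1 + lam) * y + mβ := by
      have := hcomb y z
      rw [hAB] at this
      rw [← this, hAB]
      rw [← add_mul, hab, one_mul]
    rw [hAa, hbinv, ← hAB, hyz]
    rw [← add_mul, hab, one_mul]
  refine ⟨hineq, fun z => heq _ z rfl, fun hS y z => ⟨fun hEq => ?_, heq y z⟩⟩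
  by_contra hne
  have hABne : (1 + lam) * y + mβ ≠ -(1 + lam⁻¹) * z - lam⁻¹ * mβ := by
    intro h
    apply hne
    have h' : (1 + lam) * y = (1 + lam) * (-(z + mβ) / lam) := by
      have hx : (1 + lam) * (-(z + mβ) / lam)
          = -(1 + lam⁻¹) * z - lam⁻¹ * mβ - mβ := by field_simp; ring
      rw [hx]; linarith
    exact mul_left_cancel₀ h1.ne' h'
  have := hS.2 (Set.mem_univ ((1 + lam) * y + mβ)) (Set.mem_univ _) hABne ha hb hab
  rw [smul_eq_mul, smul_eq_mul, smul_eq_mul, smul_eq_mul, hcomb y z] at this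
  rw [hAa, hbinv] at hEq
  linarith
end

section
/- Let V : ℝ → ℝ be convex with |V(x)| ≤ C(1 + |x|^k) for some constants C > 0 and k ∈ ℕ. Let σ, T, σ_β > 0, m_β ∈ ℝ, set λ := √(1 + σ_β²/(σ²T)) and I(z) := −(z + m_β)/λ. Let μ be the Gaussian measure on ℝ with mean −m_β and variance σ_β² + σ²T and let ν be the Gaussian measure on ℝ with mean 0 and variance σ²T. Then for every Borel probability measure π on ℝ × ℝ whose pushforward under the first projection is μ and under the second projection is ν, one has ∫ V(y − z) dπ(z, y) ≤ ∫ V(I(z) − z) dμ(z). -/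
/-!
For convex `V` the cost `V (y - z)` is submodular, so the antitone coupling `y = I z` should be
optimal. The certificate is a potential `ψ` with `ψ' y = V' (y - J y)`, where `J = I⁻¹`: since `V'`
is monotone, comparing `V (y - z) - V (I z - z) = ∫_{I z}^{y} V' (s - z) ds` with
`ψ y - ψ (I z) = ∫_{I z}^{y} V' (s - J s) ds` gives `V (y - z) ≤ V (I z - z) + ψ y - ψ (I z)`.
Integrating against a coupling `π` of `μ` and `ν`, the `ψ`-terms cancel because the affine map `I`
pushes the Gaussian `μ` forward to the Gaussian `ν`. Polynomial growth of `V` makes all integrals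
finite; `ψ` itself is squeezed between values of `V` at affine arguments.
-/

open MeasureTheory ProbabilityTheory Set
open scoped NNReal ENNReal

namespace ConvexOn

variable {V : ℝ → ℝ}

theorem monotone_rightDeriv (hV : ConvexOn ℝ univ V) :
    Monotone fun x ↦ derivWithin V (Ioi x) x := fun x y hxy ↦
  hV.monotoneOn_rightDeriv (by simp) (by simp) hxy

theorem integral_rightDeriv (hV : ConvexOn ℝ univ V) (a b : ℝ) :
    ∫ t in a..b, derivWithin V (Ioi t) t = V b - V a :=
  intervalIntegral.integral_eq_sub_of_hasDeriv_right
    (hV.continuousOn isOpen_univ |>.mono (subset_univ _))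
    (fun x _ ↦ hV.hasDerivWithinAt_rightDeriv_of_mem_interior (by simp))
    hV.monotone_rightDeriv.intervalIntegrable

end ConvexOn

/-- The potential of the coupling `y = I z` with antitone inverse `z = J y`: its derivative at `y`
is the slope `V' (y - J y)` of the cost along the graph of the coupling. -/
noncomputable def transportPotential (V J : ℝ → ℝ) (y : ℝ) : ℝ :=
  ∫ s in (0 : ℝ)..y, derivWithin V (Ioi (s - J s)) (s - J s)

namespace ConvexOn

variable {V J : ℝ → ℝ}

theorem monotone_rightDeriv_sub (hV : ConvexOn ℝ univ V) (hJ : Antitone J) :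
    Monotone fun s ↦ derivWithin V (Ioi (s - J s)) (s - J s) := fun _ _ hss' ↦
  hV.monotone_rightDeriv (sub_le_sub hss' (hJ hss'))

theorem sub_le_transportPotential_sub (hV : ConvexOn ℝ univ V) (hJ : Antitone J) (x y : ℝ) :
    V (y - J x) - V (x - J x) ≤ transportPotential V J y - transportPotential V J x := by
  set g : ℝ → ℝ := fun t ↦ derivWithin V (Ioi t) t
  have hg : Monotone g := hV.monotone_rightDeriv
  have hG := hV.monotone_rightDeriv_sub hJ
  have hgx : Monotone fun s ↦ g (s - J x) := fun s s' h ↦ hg (by linarith)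
  rw [transportPotential, transportPotential,
    intervalIntegral.integral_interval_sub_left hG.intervalIntegrable hG.intervalIntegrable,
    ← hV.integral_rightDeriv, ← intervalIntegral.integral_comp_sub_right]
  -- along the coupling, `s - J s` lies on the same side of `s - J x` as `s` does of `x`
  rcases le_total x y with hxy | hyx
  · exact intervalIntegral.integral_mono_on hxy hgx.intervalIntegrable hG.intervalIntegrable
      fun s hs ↦ hg (sub_le_sub_left (hJ hs.1) s)
  · rw [intervalIntegral.integral_symm y, intervalIntegral.integral_symm y, neg_le_neg_iff]
    exact intervalIntegral.integral_mono_on hyx hG.intervalIntegrable hgx.intervalIntegrable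
      fun s hs ↦ hg (sub_le_sub_left (hJ hs.2) s)

theorem integrable_transportPotential {ν : Measure ℝ} [IsFiniteMeasure ν]
    (hV : ConvexOn ℝ univ V) (hJ : Antitone J)
    (h₀ : Integrable (fun y ↦ V (y - J 0)) ν) (h₁ : Integrable (fun y ↦ V (y - J y)) ν)
    (h₂ : Integrable (fun y ↦ V (-J y)) ν) :
    Integrable (transportPotential V J) ν := by
  have hψ0 : transportPotential V J 0 = 0 := intervalIntegral.integral_same
  refine integrable_of_le_of_le (g₁ := fun y ↦ V (y - J 0) - V (0 - J 0))
    (g₂ := fun y ↦ V (y - J y) - V (-J y)) ?_ (ae_of_all _ fun y ↦ ?_) (ae_of_all _ fun y ↦ ?_)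
    (h₀.sub (integrable_const _)) (h₁.sub h₂)
  · exact (intervalIntegral.continuous_primitive
      (fun _ _ ↦ (hV.monotone_rightDeriv_sub hJ).intervalIntegrable) 0).aestronglyMeasurable
  · simpa [hψ0] using hV.sub_le_transportPotential_sub hJ 0 y
  · have := hV.sub_le_transportPotential_sub hJ y 0
    rw [zero_sub, hψ0] at this
    linarith

end ConvexOn

theorem MemLp.integrable_comp_of_abs_le {α : Type*} [MeasurableSpace α] {μ : Measure α}
    [IsFiniteMeasure μ] {V : ℝ → ℝ} (hVc : Continuous V) {C : ℝ} {k : ℕ}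
    (hV : ∀ x, |V x| ≤ C * (1 + |x| ^ k)) {h : α → ℝ} (hh : MemLp h k μ) :
    Integrable (fun a ↦ V (h a)) μ :=
  (((integrable_const 1).add hh.integrable_norm_pow').const_mul C).mono'
    (hVc.comp_aestronglyMeasurable hh.1) (ae_of_all _ fun a ↦ hV (h a))

theorem integral_le_of_le_add_sub_potential {α β : Type*} [MeasurableSpace α] [MeasurableSpace β]
    {π : Measure (α × β)} {μ : Measure α} {ν : Measure β} {I : α → β}
    {c : α × β → ℝ} {f : α → ℝ} {ψ : β → ℝ}
    (hπμ : π.map Prod.fst = μ) (hπν : π.map Prod.snd = ν) (hI : Measurable I) (hIμ : μ.map I = ν)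
    (hc : Integrable c π) (hf : Integrable f μ) (hψ : Integrable ψ ν)
    (hle : ∀ z y, c (z, y) ≤ f z + (ψ y - ψ (I z))) :
    ∫ q, c q ∂π ≤ ∫ z, f z ∂μ := by
  subst hπμ hπν
  have hψI : Integrable (fun z ↦ ψ (I z)) (π.map Prod.fst) := by
    rw [← hIμ] at hψ; exact hψ.comp_measurable hI
  have hfπ : Integrable (fun q ↦ f q.1) π := hf.comp_measurable measurable_fst
  have hψπ : Integrable (fun q ↦ ψ q.2) π := hψ.comp_measurable measurable_snd
  have hψIπ : Integrable (fun q ↦ ψ (I q.1)) π := hψI.comp_measurable measurable_fst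
  have hψ_transport : ∫ y, ψ y ∂(π.map Prod.snd) = ∫ z, ψ (I z) ∂(π.map Prod.fst) := by
    rw [← hIμ, integral_map hI.aemeasurable (hIμ ▸ hψ.1)]
  have hdiff : Integrable (fun q ↦ ψ q.2 - ψ (I q.1)) π := hψπ.sub hψIπ
  calc ∫ q, c q ∂π ≤ ∫ q, f q.1 + (ψ q.2 - ψ (I q.1)) ∂π :=
        integral_mono hc (hfπ.add hdiff) fun q ↦ hle q.1 q.2
    _ = ∫ z, f z ∂(π.map Prod.fst) := by
        rw [integral_add hfπ hdiff, integral_sub hψπ hψIπ,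
          ← integral_map measurable_snd.aemeasurable hψ.1,
          ← integral_map measurable_fst.aemeasurable hψI.1, hψ_transport, sub_self, add_zero,
          integral_map measurable_fst.aemeasurable hf.1]

theorem gaussianReal_map_neg_add_div {m l : ℝ} {v w : ℝ≥0} (hl : l ≠ 0)
    (hvw : (v : ℝ) = l ^ 2 * w) :
    (gaussianReal (-m) v).map (fun z ↦ -(z + m) / l) = gaussianReal 0 w := by
  have : (fun z ↦ -(z + m) / l) = (· / l) ∘ (fun x ↦ -x) ∘ (· + m) := rfl
  rw [this, ← Measure.map_map (by fun_prop) (by fun_prop),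
    ← Measure.map_map (by fun_prop) (by fun_prop),
    gaussianReal_map_add_const, gaussianReal_map_neg, gaussianReal_map_div_const]
  congr 1
  · simp
  · ext; simp [hvw, hl]

theorem memLp_of_map_eq_gaussianReal {α : Type*} [MeasurableSpace α] {π : Measure α} {X : α → ℝ}
    {m : ℝ} {v : ℝ≥0} (hX : Measurable X) {p : ℝ≥0∞} (hp : p ≠ ∞)
    (hπX : π.map X = gaussianReal m v) : MemLp X p π := by
  have h := memLp_id_gaussianReal' (μ := m) (v := v) p hp
  rwa [← hπX, memLp_map_measure_iff aestronglyMeasurable_id hX.aemeasurable] at h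

theorem integrable_comp_affine_gaussianReal {V : ℝ → ℝ} (hVc : Continuous V) {C : ℝ} {k : ℕ}
    (hV : ∀ x, |V x| ≤ C * (1 + |x| ^ k)) (m : ℝ) (v : ℝ≥0) (a b : ℝ) :
    Integrable (fun x ↦ V (a * x + b)) (gaussianReal m v) :=
  MemLp.integrable_comp_of_abs_le hVc hV
    (((memLp_id_gaussianReal' _ (ENNReal.natCast_ne_top k)).const_mul a).add (memLp_const b))

theorem activist_coupling_optimal_general (V : ℝ → ℝ) (hV : ConvexOn ℝ Set.univ V)
    (C : ℝ) (k : ℕ) (hgrowth : ∀ x, |V x| ≤ C * (1 + |x|^k))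
    (σ T σβ mβ : ℝ) (hσ : 0 < σ) (hT : 0 < T) :
    ∀ π : Measure (ℝ × ℝ), IsProbabilityMeasure π →
      π.map Prod.fst = gaussianReal (-mβ) ((σβ^2 + σ^2*T).toNNReal) →
      π.map Prod.snd = gaussianReal 0 ((σ^2*T).toNNReal) →
      ∫ q, V (q.2 - q.1) ∂π ≤
        ∫ z, V (-(z + mβ) / Real.sqrt (1 + σβ^2 / (σ^2*T)) - z)
          ∂(gaussianReal (-mβ) ((σβ^2 + σ^2*T).toNNReal)) := by
  intro π _ hπμ hπν
  set l := Real.sqrt (1 + σβ^2 / (σ^2*T))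
  have hσT : 0 < σ^2 * T := by positivity
  have hl : 0 < l := Real.sqrt_pos.2 (by positivity)
  have hl_sq : σβ^2 + σ^2*T = l^2 * (σ^2*T) := by
    rw [Real.sq_sqrt (by positivity)]; field_simp; ring
  set J : ℝ → ℝ := fun y ↦ -(l * y) - mβ
  have hJ : Antitone J := fun a b hab ↦ by simp only [J]; nlinarith
  have hVc : Continuous V := continuousOn_univ.mp (hV.continuousOn isOpen_univ)
  have hVaff := integrable_comp_affine_gaussianReal hVc hgrowth
  refine integral_le_of_le_add_sub_potential (ψ := transportPotential V J) hπμ hπν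
    (by fun_prop)
    (gaussianReal_map_neg_add_div hl.ne' ?_) ?_ ?_ ?_ fun z y ↦ ?_
  · rw [Real.coe_toNNReal _ (by positivity), Real.coe_toNNReal _ hσT.le, hl_sq]
  · have hk : (k : ℝ≥0∞) ≠ ∞ := ENNReal.natCast_ne_top k
    exact MemLp.integrable_comp_of_abs_le hVc hgrowth
      ((memLp_of_map_eq_gaussianReal measurable_snd hk hπν).sub
        (memLp_of_map_eq_gaussianReal measurable_fst hk hπμ))
  · convert hVaff (-mβ) _ (-l⁻¹ - 1) (-mβ / l) using 3 with z
    ring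
  · refine hV.integrable_transportPotential hJ ?_ ?_ ?_
    · convert hVaff 0 _ 1 mβ using 3 with y; simp only [J]; ring
    · convert hVaff 0 _ (1 + l) mβ using 3 with y; simp only [J]; ring
    · convert hVaff 0 _ l mβ using 3 with y; simp only [J]; ring
  · have hJI : J (-(z + mβ) / l) = z := by simp only [J]; field_simp; ring
    have := hV.sub_le_transportPotential_sub hJ (-(z + mβ) / l) y
    rw [hJI] at this
    exact sub_le_iff_le_add'.mp this

/-- Transport optimality in the activist trading model (Lemma 6.2): for convex `V` with
polynomial growth, the decreasing affine coupling `I(z) = −(z+m_β)/λ` between the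
Gaussian law `μ = N(−m_β, σ_β² + σ²T)` and `ν = N(0, σ²T)` maximizes `∫ V(y−z) dπ`
over all couplings `π` of `(μ, ν)`. -/
theorem activist_coupling_optimal (V : ℝ → ℝ) (hV : ConvexOn ℝ Set.univ V)
    (C : ℝ) (hC : 0 < C) (k : ℕ) (hgrowth : ∀ x, |V x| ≤ C * (1 + |x|^k))
    (σ T σβ mβ : ℝ) (hσ : 0 < σ) (hT : 0 < T) (hσβ : 0 < σβ) :
    ∀ π : Measure (ℝ × ℝ), IsProbabilityMeasure π →
      π.map Prod.fst = gaussianReal (-mβ) ((σβ^2 + σ^2*T).toNNReal) →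
      π.map Prod.snd = gaussianReal 0 ((σ^2*T).toNNReal) →
      ∫ q, V (q.2 - q.1) ∂π ≤
        ∫ z, V (-(z + mβ) / Real.sqrt (1 + σβ^2 / (σ^2*T)) - z)
          ∂(gaussianReal (-mβ) ((σβ^2 + σ^2*T).toNNReal)) :=
  activist_coupling_optimal_general V hV C k hgrowth σ T σβ mβ hσ hT
end

section
/- Let ψ > 0, ε > 0, and m_β ∈ ℝ. Define Γ(y) := (1/2)(ψ y² + (1/ε)(y + εψ m_β)²) and Γᶜ(z,s) := (ψ/2) z² − z s − εψ m_β (s − ψ z) + (ε/2)(s − ψ z)². Then for all y, z, s ∈ ℝ one has (ψ/2)(y − z)² + (y − z) s ≤ Γ(y) + Γᶜ(z,s), with equality if and only if y = ε (s − ψ (z + m_β)). -/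
/-- ε-Young duality for the linear-quadratic payoff (Lemma 6.3(a)): the surplus
`(ψ/2)(y−z)² + (y−z)s` is dominated by `Γ(y) + Γᶜ(z,s)` with the explicit potentials
`Γ(y) = ½(ψy² + (1/ε)(y + εψm_β)²)` and
`Γᶜ(z,s) = (ψ/2)z² − zs − εψm_β(s − ψz) + (ε/2)(s − ψz)²`, with equality if and only
if `y = ε(s − ψ(z + mβ))`. -/
theorem linear_quadratic_young_duality (ψ ε mβ : ℝ) (hψ : 0 < ψ) (hε : 0 < ε) :
    ∀ y z s : ℝ,
      ((ψ/2) * (y - z)^2 + (y - z) * s ≤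
        (1/2) * (ψ * y^2 + (1/ε) * (y + ε*ψ*mβ)^2)
          + ((ψ/2) * z^2 - z*s - ε*ψ*mβ*(s - ψ*z) + (ε/2) * (s - ψ*z)^2)) ∧
      (((ψ/2) * (y - z)^2 + (y - z) * s =
        (1/2) * (ψ * y^2 + (1/ε) * (y + ε*ψ*mβ)^2)
          + ((ψ/2) * z^2 - z*s - ε*ψ*mβ*(s - ψ*z) + (ε/2) * (s - ψ*z)^2))
        ↔ y = ε * (s - ψ * (z + mβ))) := by
  intro y z s
  have hε' : (ε : ℝ) ≠ 0 := ne_of_gt hε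
  have key : (1/2) * (ψ * y^2 + (1/ε) * (y + ε*ψ*mβ)^2)
      + ((ψ/2) * z^2 - z*s - ε*ψ*mβ*(s - ψ*z) + (ε/2) * (s - ψ*z)^2)
      - ((ψ/2) * (y - z)^2 + (y - z) * s)
      = (1/(2*ε)) * (y - ε * (s - ψ * (z + mβ)))^2 := by
    field_simp
    ring
  constructor
  · have hnn : 0 ≤ (1/(2*ε)) * (y - ε * (s - ψ * (z + mβ)))^2 := by positivity
    linarith [key]
  · constructor
    · intro h
      have h2 : (1/(2*ε)) * (y - ε * (s - ψ * (z + mβ)))^2 = 0 := by linarith [key]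
      have h3 : (y - ε * (s - ψ * (z + mβ)))^2 = 0 := by
        have : (1/(2*ε)) ≠ 0 := by positivity
        exact (mul_eq_zero.mp h2).resolve_left this
      have := pow_eq_zero_iff (n := 2) (by norm_num) |>.mp h3
      linarith
    · intro h
      have h0 : (y - ε * (s - ψ * (z + mβ)))^2 = 0 := by rw [h]; ring
      rw [h0, mul_zero] at key
      linarith [key]
end

section
/- Let σ, T, σ_β, Σ_T > 0, ψ > 0, m_β ∈ ℝ. Set σ̃² := σ²T + σ_β², λ² := Σ_T²/(σ²T), λ̃² := σ̃²/(σ²T), and ε := 1/√(ψ² λ̃² + λ²). Let Y and W be independent real random variables with Y Gaussian with mean 0 and variance σ²T and W standard Gaussian (mean 0, variance 1). Define Z̃ := −m_β − ε ψ λ̃² Y + ε λ λ̃ σ √T · W and S := ε λ² Y + ε ψ λ λ̃ σ √T · W. Then: Z̃ is Gaussian with mean −m_β and variance σ̃², S is Gaussian with mean 0 and variance Σ_T², Z̃ and S are independent, and Y = ε (S − ψ (Z̃ + m_β)) almost surely. -/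
/-!
The pair `(Y, W)` is jointly Gaussian, hence so is its linear image `(Z̃ + m_β, S)`; jointly
Gaussian variables are independent as soon as they are uncorrelated. Every remaining claim (the two
variances, the vanishing covariance, and the transport identity) is an algebraic consequence of
`ε² (ψ² λ̃² + λ²) = 1` together with `λ² σ² T = Σ_T²` and `λ̃² σ² T = σ̃²`.
-/

open MeasureTheory ProbabilityTheory
open scoped NNReal

lemma sq_mul_of_eq_sqrt_div {x a b : ℝ} (hx : x = √(a / b)) (ha : 0 ≤ a) (hb : 0 < b) :
    x ^ 2 * b = a := by
  rw [hx, Real.sq_sqrt (div_nonneg ha hb.le), div_mul_cancel₀ _ hb.ne']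

lemma sq_mul_of_eq_one_div_sqrt {x a : ℝ} (hx : x = 1 / √a) (ha : 0 < a) : x ^ 2 * a = 1 := by
  rw [hx, div_pow, one_pow, Real.sq_sqrt ha.le, one_div_mul_cancel ha.ne']

namespace ProbabilityTheory

variable {Ω : Type*} {mΩ : MeasurableSpace Ω} {P : Measure Ω} {X Y : Ω → ℝ}

lemma IndepFun.covariance_linear_comb [IsFiniteMeasure P] (h : IndepFun X Y P)
    (hX : MemLp X 2 P) (hY : MemLp Y 2 P) (a b c d : ℝ) :
    cov[fun ω ↦ a * X ω + b * Y ω, fun ω ↦ c * X ω + d * Y ω; P]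
      = a * c * Var[X; P] + b * d * Var[Y; P] := by
  change cov[(fun ω ↦ a * X ω) + (fun ω ↦ b * Y ω),
    (fun ω ↦ c * X ω) + (fun ω ↦ d * Y ω); P] = _
  rw [covariance_add_left (hX.const_mul a) (hY.const_mul b)
      ((hX.const_mul c).add (hY.const_mul d)),
    covariance_add_right (hX.const_mul a) (hX.const_mul c) (hY.const_mul d),
    covariance_add_right (hY.const_mul b) (hX.const_mul c) (hY.const_mul d)]
  simp only [covariance_const_mul_left, covariance_const_mul_right,
    covariance_self hX.aemeasurable, covariance_self hY.aemeasurable,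
    h.covariance_eq_zero hX hY, h.symm.covariance_eq_zero hY hX]
  ring

variable {μ₁ μ₂ : ℝ} {v₁ v₂ : ℝ≥0}

lemma IndepFun.hasLaw_linear_comb_gaussianReal (h : IndepFun X Y P)
    (hX : HasLaw X (gaussianReal μ₁ v₁) P) (hY : HasLaw Y (gaussianReal μ₂ v₂) P)
    (a b : ℝ) {v : ℝ≥0} (hv : (v : ℝ) = a ^ 2 * v₁ + b ^ 2 * v₂) :
    HasLaw (fun ω ↦ a * X ω + b * Y ω) (gaussianReal (a * μ₁ + b * μ₂) v) P := by
  have hsum := gaussianReal_add_gaussianReal_of_indepFun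
    (h.comp (measurable_const_mul a) (measurable_const_mul b))
    (gaussianReal_const_mul hX a).map_eq (gaussianReal_const_mul hY b).map_eq
  have hv' : v = .mk (a ^ 2) (sq_nonneg _) * v₁ + .mk (b ^ 2) (sq_nonneg _) * v₂ :=
    NNReal.eq (by simp [hv])
  exact ⟨by fun_prop, hv' ▸ hsum⟩

lemma IndepFun.indepFun_linear_comb_of_gaussianReal (h : IndepFun X Y P)
    (hX : HasLaw X (gaussianReal μ₁ v₁) P) (hY : HasLaw Y (gaussianReal μ₂ v₂) P)
    {a b c d : ℝ} (horth : a * c * v₁ + b * d * v₂ = 0) :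
    IndepFun (fun ω ↦ a * X ω + b * Y ω) (fun ω ↦ c * X ω + d * Y ω) P := by
  have hXY : HasGaussianLaw (fun ω ↦ (X ω, Y ω)) P :=
    h.hasGaussianLaw hX.hasGaussianLaw hY.hasGaussianLaw
  let L : ℝ × ℝ →L[ℝ] ℝ × ℝ :=
    (a • ContinuousLinearMap.fst ℝ ℝ ℝ + b • ContinuousLinearMap.snd ℝ ℝ ℝ).prod
      (c • ContinuousLinearMap.fst ℝ ℝ ℝ + d • ContinuousLinearMap.snd ℝ ℝ ℝ)
  refine HasGaussianLaw.indepFun_of_covariance_eq_zero (by simpa [L] using hXY.map_fun L) ?_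
  have := hX.isProbabilityMeasure
  rw [h.covariance_linear_comb hX.hasGaussianLaw.memLp_two hY.hasGaussianLaw.memLp_two,
    hX.variance_eq, hY.variance_eq, variance_id_gaussianReal, variance_id_gaussianReal, horth]

end ProbabilityTheory

theorem optimal_coupling_reconstruction_general
    {Ω : Type*} [MeasurableSpace Ω] (P : Measure Ω)
    (σ T σβ SigT ψ mβ : ℝ) (hσ : 0 < σ) (hT : 0 < T)
    (hψ : 0 < ψ)
    (Y W : Ω → ℝ) (hYm : Measurable Y) (hWm : Measurable W)
    (hindep : IndepFun Y W P)
    (hYlaw : P.map Y = gaussianReal 0 ((σ^2*T).toNNReal))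
    (hWlaw : P.map W = gaussianReal 0 1)
    (lam tlam ε : ℝ)
    (hlam : lam = Real.sqrt (SigT^2 / (σ^2*T)))
    (htlam : tlam = Real.sqrt ((σ^2*T + σβ^2) / (σ^2*T)))
    (hε : ε = 1 / Real.sqrt (ψ^2 * tlam^2 + lam^2))
    (Zt S : Ω → ℝ)
    (hZt : Zt = fun ω => -mβ - ε*ψ*tlam^2 * Y ω + ε*lam*tlam*σ*Real.sqrt T * W ω)
    (hS : S = fun ω => ε*lam^2 * Y ω + ε*ψ*lam*tlam*σ*Real.sqrt T * W ω) :
    P.map Zt = gaussianReal (-mβ) ((σ^2*T + σβ^2).toNNReal) ∧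
    P.map S = gaussianReal 0 ((SigT^2).toNNReal) ∧
    IndepFun Zt S P ∧
    ∀ᵐ ω ∂P, Y ω = ε * (S ω - ψ * (Zt ω + mβ)) := by
  have hσT : 0 < σ ^ 2 * T := by positivity
  have hvarY : ((σ ^ 2 * T).toNNReal : ℝ) = σ ^ 2 * T := Real.coe_toNNReal _ hσT.le
  have hsqrtT : √T ^ 2 = T := Real.sq_sqrt hT.le
  have hlam2 := sq_mul_of_eq_sqrt_div hlam (sq_nonneg SigT) hσT
  have htlam2 := sq_mul_of_eq_sqrt_div htlam (by positivity) hσT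
  have htlam_pos : 0 < tlam := htlam ▸ by positivity
  have hε2 := sq_mul_of_eq_one_div_sqrt hε (by positivity)
  have hYg : HasLaw Y (gaussianReal 0 (σ ^ 2 * T).toNNReal) P := ⟨hYm.aemeasurable, hYlaw⟩
  have hWg : HasLaw W (gaussianReal 0 1) P := ⟨hWm.aemeasurable, hWlaw⟩
  have hZt' : Zt = fun ω ↦
      -mβ + (-(ε * ψ * tlam ^ 2) * Y ω + ε * lam * tlam * σ * √T * W ω) := by
    rw [hZt]; funext ω; ring
  refine ⟨?_, ?_, ?_, Filter.Eventually.of_forall fun ω ↦ ?_⟩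
  · have hZlaw := hindep.hasLaw_linear_comb_gaussianReal hYg hWg
      (-(ε * ψ * tlam ^ 2)) (ε * lam * tlam * σ * √T)
      (v := (σ ^ 2 * T + σβ ^ 2).toNNReal) (by
        rw [hvarY, Real.coe_toNNReal _ (by positivity), NNReal.coe_one]
        linear_combination -htlam2 - tlam ^ 2 * σ ^ 2 * T * hε2
          - ε ^ 2 * lam ^ 2 * tlam ^ 2 * σ ^ 2 * hsqrtT)
    simpa [hZt'] using (gaussianReal_const_add hZlaw (-mβ)).map_eq
  · have hSlaw := hindep.hasLaw_linear_comb_gaussianReal hYg hWg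
      (ε * lam ^ 2) (ε * ψ * lam * tlam * σ * √T)
      (v := (SigT ^ 2).toNNReal) (by
        rw [hvarY, Real.coe_toNNReal _ (sq_nonneg _), NNReal.coe_one]
        linear_combination -hlam2 - lam ^ 2 * σ ^ 2 * T * hε2
          - ε ^ 2 * ψ ^ 2 * lam ^ 2 * tlam ^ 2 * σ ^ 2 * hsqrtT)
    simpa [hS] using hSlaw.map_eq
  · rw [hZt', hS]
    refine (hindep.indepFun_linear_comb_of_gaussianReal hYg hWg ?_).comp
      (measurable_const_add (-mβ)) measurable_id
    rw [hvarY, NNReal.coe_one]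
    linear_combination ε ^ 2 * ψ * tlam ^ 2 * lam ^ 2 * σ ^ 2 * hsqrtT
  · rw [hZt, hS]
    linear_combination -Y ω * hε2

/-- Lemma 6.3(b): reconstruction of the optimal coupling from independent Gaussians.
With `Y ~ N(0, σ²T)` and `W ~ N(0,1)` independent, the affine combinations
`Z̃ = −m_β − εψλ̃²Y + ελλ̃σ√T·W` and `S = ελ²Y + εψλλ̃σ√T·W` have the marginal laws
`N(−m_β, σ̃²)` and `N(0, Σ_T²)` respectively, are independent, and satisfy
`Y = ε(S − ψ(Z̃ + m_β))` almost surely.  (`SigT` stands for `Σ_T`.) -/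
theorem optimal_coupling_reconstruction
    {Ω : Type*} [MeasurableSpace Ω] (P : Measure Ω) [IsProbabilityMeasure P]
    (σ T σβ SigT ψ mβ : ℝ) (hσ : 0 < σ) (hT : 0 < T) (hσβ : 0 < σβ)
    (hSigT : 0 < SigT) (hψ : 0 < ψ)
    (Y W : Ω → ℝ) (hYm : Measurable Y) (hWm : Measurable W)
    (hindep : IndepFun Y W P)
    (hYlaw : P.map Y = gaussianReal 0 ((σ^2*T).toNNReal))
    (hWlaw : P.map W = gaussianReal 0 1)
    (lam tlam ε : ℝ)
    (hlam : lam = Real.sqrt (SigT^2 / (σ^2*T)))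
    (htlam : tlam = Real.sqrt ((σ^2*T + σβ^2) / (σ^2*T)))
    (hε : ε = 1 / Real.sqrt (ψ^2 * tlam^2 + lam^2))
    (Zt S : Ω → ℝ)
    (hZt : Zt = fun ω => -mβ - ε*ψ*tlam^2 * Y ω + ε*lam*tlam*σ*Real.sqrt T * W ω)
    (hS : S = fun ω => ε*lam^2 * Y ω + ε*ψ*lam*tlam*σ*Real.sqrt T * W ω) :
    P.map Zt = gaussianReal (-mβ) ((σ^2*T + σβ^2).toNNReal) ∧
    P.map S = gaussianReal 0 ((SigT^2).toNNReal) ∧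
    IndepFun Zt S P ∧
    ∀ᵐ ω ∂P, Y ω = ε * (S ω - ψ * (Zt ω + mβ)) :=
  optimal_coupling_reconstruction_general P σ T σβ SigT ψ mβ hσ hT hψ Y W hYm hWm hindep hYlaw hWlaw
    lam tlam ε hlam htlam hε Zt S hZt hS
end

section
/- Let σ, T, σ_β, Σ_T > 0, ψ > 0, m_β ∈ ℝ, and set ε := √( σ²T / (Σ_T² + ψ²(σ²T + σ_β²)) ) and I(z,s) := ε (s − ψ (z + m_β)). Let μ be the product on ℝ² of the Gaussian measure with mean −m_β and variance σ²T + σ_β² (first factor) and the Gaussian measure with mean 0 and variance Σ_T² (second factor), and let ν be the Gaussian measure on ℝ with mean 0 and variance σ²T. Then for every Borel probability measure π on ℝ² × ℝ whose pushforward under the first projection is μ and under the second projection is ν, one has ∫ [ (ψ/2)(y − z)² + (y − z) s ] dπ((z,s), y) ≤ ∫ [ (ψ/2)(I(z,s) − z)² + (I(z,s) − z) s ] dμ(z,s). -/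
open MeasureTheory ProbabilityTheory
open scoped NNReal

/-!
Write the surplus as `g y + y W(z,s) + f(z,s)` with `W(z,s) = s - ψ(z + m_β)`. For a coupling `π`,
the separable parts `g` and `f` integrate to the same values as for any other coupling, and AM-GM
bounds the cross term `y W` by `ε W² / 2 + y² / (2ε)`, whose integral is again fixed by the
marginals. Equality holds exactly when `y = ε W`; this is the map `I`, and it is admissible because
`ε W` is a centred Gaussian of variance `ε² (Σ_T² + ψ²(σ²T + σ_β²)) = σ²T` under `μ`.
-/

lemma gaussianReal_prod_map_affine (m₁ m₂ : ℝ) (v₁ v₂ : ℝ≥0) (a b c : ℝ) :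
    ((gaussianReal m₁ v₁).prod (gaussianReal m₂ v₂)).map (fun p => a * p.1 + b * p.2 + c)
      = gaussianReal (a * m₁ + b * m₂ + c)
          (.mk (a ^ 2) (sq_nonneg a) * v₁ + .mk (b ^ 2) (sq_nonneg b) * v₂) := by
  rw [← gaussianReal_map_add_const, ← gaussianReal_conv_gaussianReal,
    ← gaussianReal_map_const_mul, ← gaussianReal_map_const_mul, Measure.conv,
    Measure.map_prod_map _ _ (by fun_prop) (by fun_prop),
    Measure.map_map (by fun_prop) (by fun_prop), Measure.map_map (by fun_prop) (by fun_prop)]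
  rfl

lemma gaussianReal_prod_map_const_mul_sub (m : ℝ) (v₁ v₂ w : ℝ≥0) (c ε : ℝ)
    (hε : ε ^ 2 * (v₂ + c ^ 2 * v₁) = w) :
    ((gaussianReal m v₁).prod (gaussianReal 0 v₂)).map (fun p => ε * (p.2 - c * (p.1 - m)))
      = gaussianReal 0 w := by
  have haffine : (fun p : ℝ × ℝ => ε * (p.2 - c * (p.1 - m)))
      = fun p => -(ε * c) * p.1 + ε * p.2 + ε * c * m := by
    ext p
    ring
  rw [haffine, gaussianReal_prod_map_affine]
  congr 1
  · ring
  · ext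
    push_cast
    linear_combination hε

section Coupling

variable {α : Type*} [MeasurableSpace α] {μ : Measure α} {ν : Measure ℝ} {π : Measure (α × ℝ)}

lemma integrable_comp_fst_add_comp_snd_of_map (hμ : π.map Prod.fst = μ) (hν : π.map Prod.snd = ν)
    {k : α → ℝ} {h : ℝ → ℝ} (hk : Integrable k μ) (hh : Integrable h ν) :
    Integrable (fun q => k q.1 + h q.2) π := by
  subst hμ hν
  exact (hk.comp_measurable measurable_fst).add (hh.comp_measurable measurable_snd)

lemma integral_comp_fst_add_comp_snd_of_map (hμ : π.map Prod.fst = μ) (hν : π.map Prod.snd = ν)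
    {k : α → ℝ} {h : ℝ → ℝ} (hk : Integrable k μ) (hh : Integrable h ν) :
    ∫ q, (k q.1 + h q.2) ∂π = ∫ x, k x ∂μ + ∫ y, h y ∂ν := by
  subst hμ hν
  have hkπ : Integrable (fun q : α × ℝ => k q.1) π := hk.comp_measurable measurable_fst
  have hhπ : Integrable (fun q : α × ℝ => h q.2) π := hh.comp_measurable measurable_snd
  rw [integral_add hkπ hhπ, integral_map measurable_fst.aemeasurable hk.1,
    integral_map measurable_snd.aemeasurable hh.1]

theorem integral_coupling_le_of_map_const_mul_eq (hμ : π.map Prod.fst = μ) (hν : π.map Prod.snd = ν)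
    {W f : α → ℝ} {g : ℝ → ℝ} {ε : ℝ} (hε : 0 < ε) (hW : MemLp W 2 μ) (hf : Integrable f μ)
    (hg : Integrable g ν) (hεW : μ.map (fun x => ε * W x) = ν) :
    ∫ q, (g q.2 + q.2 * W q.1 + f q.1) ∂π ≤ ∫ x, (g (ε * W x) + ε * W x * W x + f x) ∂μ := by
  have hεW_meas : AEMeasurable (fun x => ε * W x) μ := (hW.const_mul ε).1.aemeasurable
  have hid : MemLp (fun y : ℝ => y) 2 ν := by
    subst hεW
    exact (memLp_map_measure_iff aestronglyMeasurable_id hεW_meas).mpr (hW.const_mul ε)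
  set k : α → ℝ := fun x => f x + ε / 2 * W x ^ 2
  set h : ℝ → ℝ := fun y => g y + y ^ 2 / (2 * ε)
  have hk : Integrable k μ := hf.add (hW.integrable_sq.const_mul _)
  have hh : Integrable h ν := hg.add (hid.integrable_sq.div_const _)
  have hkh := integrable_comp_fst_add_comp_snd_of_map hμ hν hk hh
  have hgap : Integrable (fun q : α × ℝ => (q.2 - ε * W q.1) ^ 2) π :=
    ((hid.comp_measurePreserving ⟨measurable_snd, hν⟩).sub
      ((hW.comp_measurePreserving ⟨measurable_fst, hμ⟩).const_mul ε)).integrable_sq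
  have hsplit : ∀ x y, g y + y * W x + f x = k x + h y - (y - ε * W x) ^ 2 / (2 * ε) := by
    intro x y
    simp only [k, h]
    field_simp
    ring
  calc ∫ q, (g q.2 + q.2 * W q.1 + f q.1) ∂π
      = ∫ q, (k q.1 + h q.2 - (q.2 - ε * W q.1) ^ 2 / (2 * ε)) ∂π := by simp only [hsplit]
    _ ≤ ∫ q, (k q.1 + h q.2) ∂π :=
        integral_mono (hkh.sub (hgap.div_const _)) hkh fun q => sub_le_self _ (by positivity)
    _ = ∫ x, (k x + h (ε * W x)) ∂μ := by
        rw [integral_comp_fst_add_comp_snd_of_map hμ hν hk hh, ← hεW,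
          integral_map hεW_meas (hεW ▸ hh.1), integral_add hk]
        exact (hεW.symm ▸ hh : Integrable h _).comp_aemeasurable hεW_meas
    _ = ∫ x, (g (ε * W x) + ε * W x * W x + f x) ∂μ := by
        congr 1 with x
        simp only [k, h]
        field_simp
        ring

end Coupling

theorem linear_quadratic_coupling_optimal_general
    (σ T σβ SigT ψ mβ : ℝ) (hσ : 0 < σ) (hT : 0 < T)
    (hSigT : 0 < SigT) :
    ∀ π : Measure ((ℝ × ℝ) × ℝ), IsProbabilityMeasure π →
      π.map Prod.fst =
        (gaussianReal (-mβ) ((σ^2*T + σβ^2).toNNReal)).prod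
          (gaussianReal 0 ((SigT^2).toNNReal)) →
      π.map Prod.snd = gaussianReal 0 ((σ^2*T).toNNReal) →
      ∫ q, ((ψ/2) * (q.2 - q.1.1)^2 + (q.2 - q.1.1) * q.1.2) ∂π ≤
        ∫ p, ((ψ/2) * (Real.sqrt (σ^2*T / (SigT^2 + ψ^2*(σ^2*T + σβ^2)))
                  * (p.2 - ψ*(p.1 + mβ)) - p.1)^2
              + (Real.sqrt (σ^2*T / (SigT^2 + ψ^2*(σ^2*T + σβ^2)))
                  * (p.2 - ψ*(p.1 + mβ)) - p.1) * p.2)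
          ∂((gaussianReal (-mβ) ((σ^2*T + σβ^2).toNNReal)).prod
              (gaussianReal 0 ((SigT^2).toNNReal))) := by
  intro π _ hμ hν
  set μ := (gaussianReal (-mβ) ((σ^2*T + σβ^2).toNNReal)).prod
    (gaussianReal 0 ((SigT^2).toNNReal))
  set ν := gaussianReal 0 ((σ^2*T).toNNReal)
  set ε := Real.sqrt (σ^2*T / (SigT^2 + ψ^2*(σ^2*T + σβ^2)))
  have hA : 0 < σ^2*T := by positivity
  have hε : 0 < ε := Real.sqrt_pos.mpr (by positivity)
  have hεW : μ.map (fun p => ε * (p.2 - ψ*(p.1 + mβ))) = ν := by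
    simpa only [sub_neg_eq_add] using gaussianReal_prod_map_const_mul_sub (-mβ) _ _ _ ψ ε (by
      rw [Real.coe_toNNReal _ hA.le, Real.coe_toNNReal _ (sq_nonneg _),
        Real.coe_toNNReal _ (by positivity), Real.sq_sqrt (by positivity)]
      field_simp)
  have hz : MemLp (fun p : ℝ × ℝ => p.1) 2 μ := (memLp_id_gaussianReal 2).comp_fst _
  have hs : MemLp (fun p : ℝ × ℝ => p.2) 2 μ := (memLp_id_gaussianReal 2).comp_snd _
  have hy : MemLp (fun y : ℝ => y) 2 ν := memLp_id_gaussianReal 2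
  have hW : MemLp (fun p : ℝ × ℝ => p.2 - ψ*(p.1 + mβ)) 2 μ :=
    hs.sub ((hz.add (memLp_const mβ)).const_mul ψ)
  have hf : Integrable (fun p : ℝ × ℝ => (ψ/2) * p.1^2 - p.1 * p.2) μ :=
    (hz.integrable_sq.const_mul _).sub (hz.integrable_mul hs)
  have hg : Integrable (fun y : ℝ => (ψ/2) * y^2 + ψ*mβ * y) ν :=
    (hy.integrable_sq.const_mul _).add ((hy.integrable one_le_two).const_mul _)
  convert integral_coupling_le_of_map_const_mul_eq hμ hν hε hW hf hg hεW using 3 with q p <;> ring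

/-- Transport optimality for the linear-quadratic payoff (Lemma 6.3): with
`μ = N(−m_β, σ²T + σ_β²) ⊗ N(0, Σ_T²)` the joint law of `(Z̃_T, S_T)`,
`ν = N(0, σ²T)` the law of `Y_T`, `ε = √(σ²T/(Σ_T² + ψ²(σ²T + σ_β²)))` and
`I(z,s) = ε(s − ψ(z + m_β))`, every coupling `π` of `(μ, ν)` satisfies
`∫ [(ψ/2)(y−z)² + (y−z)s] dπ ≤ ∫ [(ψ/2)(I(z,s)−z)² + (I(z,s)−z)s] dμ`.
(`SigT` stands for `Σ_T`.) -/
theorem linear_quadratic_coupling_optimal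
    (σ T σβ SigT ψ mβ : ℝ) (hσ : 0 < σ) (hT : 0 < T) (hσβ : 0 < σβ)
    (hSigT : 0 < SigT) (hψ : 0 < ψ) :
    ∀ π : Measure ((ℝ × ℝ) × ℝ), IsProbabilityMeasure π →
      π.map Prod.fst =
        (gaussianReal (-mβ) ((σ^2*T + σβ^2).toNNReal)).prod
          (gaussianReal 0 ((SigT^2).toNNReal)) →
      π.map Prod.snd = gaussianReal 0 ((σ^2*T).toNNReal) →
      ∫ q, ((ψ/2) * (q.2 - q.1.1)^2 + (q.2 - q.1.1) * q.1.2) ∂π ≤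
        ∫ p, ((ψ/2) * (Real.sqrt (σ^2*T / (SigT^2 + ψ^2*(σ^2*T + σβ^2)))
                  * (p.2 - ψ*(p.1 + mβ)) - p.1)^2
              + (Real.sqrt (σ^2*T / (SigT^2 + ψ^2*(σ^2*T + σβ^2)))
                  * (p.2 - ψ*(p.1 + mβ)) - p.1) * p.2)
          ∂((gaussianReal (-mβ) ((σ^2*T + σβ^2).toNNReal)).prod
              (gaussianReal 0 ((SigT^2).toNNReal))) :=
  linear_quadratic_coupling_optimal_general σ T σβ SigT ψ mβ hσ hT hSigT
end

section
/- Let I : ℝ → ℝ be a function, let f : ℝ → ℝ be infinitely differentiable with f(z) > 0 for all z, let c ∈ ℝ, d > 0, and let y₁, y₂ ∈ ℝ with y₁ ≠ y₂. Assume that for i = 1, 2 the function z ↦ f(z) · exp( c · I(z)² − (I(z) − y_i)² / (2d) ) is infinitely differentiable on ℝ. Then I is infinitely differentiable on ℝ. -/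
/-- Core analytic step of Proposition 6.1 (the sobering counter-example): if `f` is
smooth and positive, `d > 0`, `y₁ ≠ y₂`, and the functions
`z ↦ f(z)·exp(c·I(z)² − (I(z) − yᵢ)²/(2d))` are smooth for `i = 1, 2`, then `I`
itself is infinitely differentiable. -/
theorem transport_map_forced_smooth (I f : ℝ → ℝ)
    (hf : ContDiff ℝ (⊤ : ℕ∞) f) (hfpos : ∀ z, 0 < f z)
    (c d : ℝ) (hd : 0 < d) (y₁ y₂ : ℝ) (hy : y₁ ≠ y₂)
    (h1 : ContDiff ℝ (⊤ : ℕ∞)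
      (fun z => f z * Real.exp (c * (I z)^2 - (I z - y₁)^2 / (2*d))))
    (h2 : ContDiff ℝ (⊤ : ℕ∞)
      (fun z => f z * Real.exp (c * (I z)^2 - (I z - y₂)^2 / (2*d)))) :
    ContDiff ℝ (⊤ : ℕ∞) I := by
  set g₁ := fun z => f z * Real.exp (c * (I z)^2 - (I z - y₁)^2 / (2*d)) with hg₁
  set g₂ := fun z => f z * Real.exp (c * (I z)^2 - (I z - y₂)^2 / (2*d)) with hg₂
  have hg₁pos : ∀ z, 0 < g₁ z := fun z => mul_pos (hfpos z) (Real.exp_pos _)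
  have hg₂pos : ∀ z, 0 < g₂ z := fun z => mul_pos (hfpos z) (Real.exp_pos _)
  have hlog : ContDiff ℝ (⊤ : ℕ∞) (fun z => Real.log (g₁ z) - Real.log (g₂ z)) :=
    ((h1.log (fun z => (hg₁pos z).ne')).sub (h2.log (fun z => (hg₂pos z).ne')))
  have key : I = fun z =>
      (2 * d * (Real.log (g₁ z) - Real.log (g₂ z)) - (y₂^2 - y₁^2)) / (2 * (y₁ - y₂)) := by
    funext z
    have hlg : Real.log (g₁ z) - Real.log (g₂ z)
        = (2 * I z * (y₁ - y₂) + (y₂^2 - y₁^2)) / (2*d) := by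
      rw [Real.log_mul (hfpos z).ne' (Real.exp_pos _).ne',
        Real.log_mul (hfpos z).ne' (Real.exp_pos _).ne',
        Real.log_exp, Real.log_exp]
      field_simp
      ring
    rw [hlg]
    have hy' : y₁ - y₂ ≠ 0 := sub_ne_zero.mpr hy
    field_simp
    ring
  rw [key]
  exact ((contDiff_const.mul hlog).sub contDiff_const).div_const _
end
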